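/- arXiv:1110.4300 — 2 statements merged into one kernel-verified Lean document; each statement's English description precedes it below -/
import Mathlib

section
/- The map t ↦ Φ(−√t) is convex on [0, ∞), where Φ is the standard normal CDF. -/
/-!
Writing `F(x) = ∫_{-∞}^x g`, the chain rule gives `d/dt F(-√t) = -g(-√t) / (2√t)`. For the Gaussian
density, `g(-√t) = e^{-t/2}/√(2π)` is decreasing in `t`, and so is `1/√t`; hence the derivative
increases on `(0, ∞)`, which is convexity.
-/

open Real MeasureTheory Set

theorem hasDerivAt_integral_Iic {E : Type*} [NormedAddCommGroup E] [NormedSpace ℝ E]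
    [CompleteSpace E] {g : ℝ → E} (hg : Integrable g) {x : ℝ} (hx : ContinuousAt g x) :
    HasDerivAt (fun y => ∫ s in Iic y, g s) (g x) x := by
  have split : (fun y => ∫ s in Iic y, g s) =
      fun y => (∫ s in Iic 0, g s) + ∫ s in (0 : ℝ)..y, g s := by
    funext y
    rw [← intervalIntegral.integral_Iic_sub_Iic hg.integrableOn hg.integrableOn]
    abel
  rw [split]
  exact (intervalIntegral.integral_hasDerivAt_right hg.intervalIntegrable
    hg.aestronglyMeasurable.stronglyMeasurableAtFilter hx).const_add _

theorem convexOn_comp_neg_sqrt {F g : ℝ → ℝ} (hF : ∀ x, HasDerivAt F (g x) x)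
    (hg : AntitoneOn (fun t => g (-√t) / √t) (Ioi 0)) :
    ConvexOn ℝ (Ici 0) (fun t => F (-√t)) := by
  have hderiv : ∀ t ∈ Ioi (0 : ℝ), HasDerivAt (fun t => F (-√t)) (-(g (-√t) / √t) / 2) t := by
    intro t ht
    refine ((hF _).comp t (hasDerivAt_sqrt (ne_of_gt ht)).neg).congr_deriv ?_
    simp only [Pi.neg_apply]
    ring
  have hFcont : Continuous F := continuous_iff_continuousAt.2 fun x => (hF x).continuousAt
  apply MonotoneOn.convexOn_of_deriv (convex_Ici 0)
  · exact (hFcont.comp continuous_sqrt.neg).continuousOn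
  · rw [interior_Ici]
    exact fun t ht => (hderiv t ht).differentiableAt.differentiableWithinAt
  · rw [interior_Ici]
    intro a ha b hb hab
    rw [(hderiv a ha).deriv, (hderiv b hb).deriv]
    linarith [hg ha hb hab]

theorem antitoneOn_gaussian_neg_sqrt_div_sqrt :
    AntitoneOn (fun t : ℝ => exp (-(-√t) ^ 2 / 2) / √(2 * π) / √t) (Ioi 0) := by
  intro a ha b hb hab
  simp only [neg_sq, sq_sqrt (le_of_lt ha), sq_sqrt (le_of_lt hb)]
  have : 0 < √a := sqrt_pos.2 ha
  gcongr

theorem integrable_gaussian : Integrable fun s : ℝ => exp (-s ^ 2 / 2) / √(2 * π) := by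
  have := (integrable_exp_neg_mul_sq (by norm_num : (0 : ℝ) < 1 / 2)).div_const (√(2 * π))
  convert this using 4
  ring

/-- The map `t ↦ Φ(−√t)` is convex on `[0,∞)`, where `Φ` is the standard normal CDF. -/
theorem stmt14 :
    ConvexOn ℝ (Set.Ici (0 : ℝ))
      (fun t : ℝ => ∫ s in Set.Iic (-Real.sqrt t),
        Real.exp (-s ^ 2 / 2) / Real.sqrt (2 * Real.pi)) :=
  convexOn_comp_neg_sqrt
    (fun _ => hasDerivAt_integral_Iic integrable_gaussian (by fun_prop))
    antitoneOn_gaussian_neg_sqrt_div_sqrt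
end

section
/- Fix constants Δ, θ > 0 and let 0 ≤ r₁ ≤ r₂ ≤ ... ≤ r_n ≤ Δ be a nondecreasing sequence of reals (the k-NN radii). Let k₁ be the largest k ∈ {1,...,n} with Δ²θ/k ≥ r_k², set k₂ = k₁ + 1, and let k* minimize θ/k + r_k² over k ∈ {k₁, k₂} (when k₂ ≤ n). Suppose κ ∈ [1, n−1] is a real number such that r_k ≤ εΔ for all integers k ≤ κ, that θ/κ ≤ ε², and that r_k ≤ 2^{1/d}εΔ for all integers k ≤ 2κ, for some ε ∈ (0,1), d ≥ 1. Then θ/k* + r_{k*}² ≤ (1 + 4Δ²)ε². -/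
/-- Deterministic core of the adaptive choice of `k`: with `r_k` the nondecreasing
k-NN radii bounded by `Δ`, `k₁` the largest `k ≤ n` with `Δ²θ/k ≥ r_k²`, `k₂ = k₁+1`,
and `k*` the minimizer of `θ/k + r_k²` over `{k₁,k₂}`, if `r_k ≤ εΔ` for `k ≤ κ`,
`θ/κ ≤ ε²`, and `r_k ≤ 2^{1/d}εΔ` for `k ≤ 2κ`, then
`θ/k* + r_{k*}² ≤ (1+4Δ²)ε²`. -/
theorem stmt17 (n : ℕ) (r : ℕ → ℝ) (Δ θ ε d κ : ℝ)
    (hΔ : 0 < Δ) (hθ : 0 < θ) (hε : 0 < ε) (hε1 : ε < 1) (hd : 1 ≤ d)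
    (hrmono : ∀ k l : ℕ, 1 ≤ k → k ≤ l → l ≤ n → r k ≤ r l)
    (hrnn : ∀ k : ℕ, 0 ≤ r k)
    (hrΔ : ∀ k : ℕ, k ≤ n → r k ≤ Δ)
    (hκ1 : 1 ≤ κ) (hκn : κ ≤ (n : ℝ) - 1)
    (k₁ k₂ kstar : ℕ)
    (hk₁1 : 1 ≤ k₁) (hk₁n : k₁ ≤ n)
    (hk₁prop : r k₁ ^ 2 ≤ Δ ^ 2 * θ / k₁)
    (hk₁max : ∀ k : ℕ, k₁ < k → k ≤ n → ¬(r k ^ 2 ≤ Δ ^ 2 * θ / k))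
    (hk₂ : k₂ = k₁ + 1)
    (hkstar : kstar = k₁ ∨ kstar = k₂)
    (hmin₁ : θ / kstar + r kstar ^ 2 ≤ θ / k₁ + r k₁ ^ 2)
    (hmin₂ : θ / kstar + r kstar ^ 2 ≤ θ / k₂ + r k₂ ^ 2)
    (hrε : ∀ k : ℕ, 1 ≤ k → (k : ℝ) ≤ κ → r k ≤ ε * Δ)
    (hθκ : θ / κ ≤ ε ^ 2)
    (hrε2 : ∀ k : ℕ, 1 ≤ k → (k : ℝ) ≤ 2 * κ → r k ≤ 2 ^ (1 / d) * ε * Δ) :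
    θ / kstar + r kstar ^ 2 ≤ (1 + 4 * Δ ^ 2) * ε ^ 2 := by
  have hκ0 : (0:ℝ) < κ := by linarith
  have hk₁pos : (0:ℝ) < (k₁:ℝ) := by exact_mod_cast hk₁1
  rcases lt_or_ge κ (k₁:ℝ) with hcase | hcase
  · -- Case k₁ > κ
    have hθk₁ : θ / (k₁:ℝ) ≤ ε ^ 2 := by
      have h1 : θ / (k₁:ℝ) ≤ θ / κ := by
        apply div_le_div_of_nonneg_left hθ.le hκ0 hcase.le
      linarith
    have hr : r k₁ ^ 2 ≤ Δ ^ 2 * ε ^ 2 := by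
      have : Δ ^ 2 * θ / (k₁:ℝ) = Δ ^ 2 * (θ / (k₁:ℝ)) := by ring
      rw [this] at hk₁prop
      nlinarith [sq_nonneg Δ]
    calc θ / kstar + r kstar ^ 2 ≤ θ / k₁ + r k₁ ^ 2 := hmin₁
      _ ≤ ε ^ 2 + Δ ^ 2 * ε ^ 2 := by linarith
      _ ≤ (1 + 4 * Δ ^ 2) * ε ^ 2 := by nlinarith [sq_nonneg Δ, sq_nonneg ε]
  · -- Case k₁ ≤ κ
    have hk₂n : k₂ ≤ n := by
      have h1 : ((k₁:ℕ):ℝ) + 1 ≤ (n:ℝ) := by linarith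
      have h2 : ((k₁ + 1 : ℕ):ℝ) ≤ (n:ℝ) := by push_cast; linarith
      have := Nat.cast_le (α := ℝ).mp h2
      omega
    have hk₂pos : (0:ℝ) < (k₂:ℝ) := by
      have : 1 ≤ k₂ := by omega
      exact_mod_cast this
    have hfail : ¬ (r k₂ ^ 2 ≤ Δ ^ 2 * θ / k₂) := hk₁max k₂ (by omega) hk₂n
    push_neg at hfail
    have hk₂2κ : (k₂:ℝ) ≤ 2 * κ := by
      have : ((k₂:ℕ):ℝ) = (k₁:ℝ) + 1 := by rw [hk₂]; push_cast; ring
      rw [this]; linarith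
    have hrk₂ : r k₂ ≤ 2 ^ (1 / d) * ε * Δ := hrε2 k₂ (by omega) hk₂2κ
    have hpowle : (2:ℝ) ^ (1 / d) ≤ 2 := by
      have h1 : 1 / d ≤ 1 := by
        rw [div_le_one (by linarith : (0:ℝ) < d)]; exact hd
      calc (2:ℝ) ^ (1 / d) ≤ (2:ℝ) ^ (1:ℝ) :=
            Real.rpow_le_rpow_of_exponent_le (by norm_num) h1
        _ = 2 := Real.rpow_one 2
    have hrk₂2 : r k₂ ≤ 2 * ε * Δ := by
      calc r k₂ ≤ 2 ^ (1 / d) * ε * Δ := hrk₂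
        _ ≤ 2 * ε * Δ :=
            mul_le_mul_of_nonneg_right (mul_le_mul_of_nonneg_right hpowle hε.le) hΔ.le
    have hrk₂sq : r k₂ ^ 2 ≤ 4 * Δ ^ 2 * ε ^ 2 := by
      nlinarith [hrnn k₂]
    have hθk₂ : θ / (k₂:ℝ) ≤ ε ^ 2 := by
      rcases le_or_gt ((k₂:ℕ):ℝ) κ with h | h
      · -- k₂ ≤ κ : use failure of the condition at k₂
        have hrk₂' : r k₂ ≤ ε * Δ := hrε k₂ (by omega) h
        have h2 : Δ ^ 2 * θ / (k₂:ℝ) = Δ ^ 2 * (θ / (k₂:ℝ)) := by ring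
        rw [h2] at hfail
        have hsq : r k₂ ^ 2 ≤ (ε * Δ) ^ 2 := pow_le_pow_left₀ (hrnn k₂) hrk₂' 2
        have hΔ2 : (0:ℝ) < Δ ^ 2 := by positivity
        have h3 : Δ ^ 2 * (θ / (k₂:ℝ)) < Δ ^ 2 * ε ^ 2 := by
          calc Δ ^ 2 * (θ / (k₂:ℝ)) < r k₂ ^ 2 := hfail
            _ ≤ (ε * Δ) ^ 2 := hsq
            _ = Δ ^ 2 * ε ^ 2 := by ring
        exact le_of_lt ((mul_lt_mul_iff_right₀ hΔ2).mp h3)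
      · have h1 : θ / (k₂:ℝ) ≤ θ / κ :=
          div_le_div_of_nonneg_left hθ.le hκ0 h.le
        linarith
    calc θ / kstar + r kstar ^ 2 ≤ θ / k₂ + r k₂ ^ 2 := hmin₂
      _ ≤ ε ^ 2 + 4 * Δ ^ 2 * ε ^ 2 := by linarith
      _ = (1 + 4 * Δ ^ 2) * ε ^ 2 := by ring
end
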